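/- arXiv:2209.13552 — 6 statements merged into one kernel-verified Lean document; each statement's English description precedes it below -/
import Mathlib

section
/- Let f : ℝ → ℝ be continuous, F(t) = ∫₀ᵗ f(s) ds, and suppose there exists θ₀ > 1 and T > 0 such that t·f(t) ≥ θ₀·F(t) for all |t| ≥ T, and F(t) > 0 for t ≠ 0. Then lim_{|t|→∞} F(t) = ∞. -/
open Filter Set

theorem stmt2 (f : ℝ → ℝ) (hf : Continuous f)
    (F : ℝ → ℝ) (hF : ∀ t, F t = ∫ s in (0:ℝ)..t, f s)
    (θ₀ : ℝ) (hθ : 1 < θ₀) (T : ℝ) (hT : 0 < T)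
    (hAR : ∀ t : ℝ, T ≤ |t| → θ₀ * F t ≤ t * f t)
    (hFpos : ∀ t : ℝ, t ≠ 0 → 0 < F t) :
    Tendsto F atTop atTop ∧ Tendsto F atBot atTop := by
  have hFeq : F = fun t => ∫ s in (0:ℝ)..t, f s := funext hF
  have hF' : ∀ t : ℝ, HasDerivAt F (f t) t := by
    intro t
    rw [hFeq]
    exact (intervalIntegral.integral_hasStrictDerivAt_right
      (hf.intervalIntegrable 0 t) (hf.stronglyMeasurableAtFilter _ _)
      hf.continuousAt).hasDerivAt
  have hFcont : Continuous F :=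
    continuous_iff_continuousAt.2 fun t => (hF' t).continuousAt
  set H : ℝ → ℝ := fun t => F t / t with hHdef
  have hHderiv : ∀ t : ℝ, t ≠ 0 →
      HasDerivAt H ((f t * t - F t * 1) / t ^ 2) t :=
    fun t ht => (hF' t).div (hasDerivAt_id t) ht
  -- Monotonicity on [T, ∞)
  have hmono : MonotoneOn H (Ici T) := by
    apply monotoneOn_of_deriv_nonneg (convex_Ici T)
    · exact hFcont.continuousOn.div continuousOn_id
        (fun t ht => (hT.trans_le ht).ne')
    · intro t ht
      rw [interior_Ici] at ht
      exact ((hHderiv t (hT.trans ht).ne').differentiableAt).differentiableWithinAt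
    · intro t ht
      rw [interior_Ici] at ht
      have ht0 : (0:ℝ) < t := hT.trans ht
      rw [(hHderiv t ht0.ne').deriv]
      apply div_nonneg _ (sq_nonneg t)
      have h1 := hAR t (by rw [abs_of_pos ht0]; exact ht.le)
      have h2 := (hFpos t ht0.ne').le
      nlinarith
  -- Monotonicity on (-∞, -T]
  have hmono2 : MonotoneOn H (Iic (-T)) := by
    apply monotoneOn_of_deriv_nonneg (convex_Iic (-T))
    · exact hFcont.continuousOn.div continuousOn_id
        (fun t ht => (ht.trans_lt (by linarith)).ne)
    · intro t ht
      rw [interior_Iic] at ht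
      have ht0 : t < 0 := ht.trans (by linarith)
      exact ((hHderiv t ht0.ne).differentiableAt).differentiableWithinAt
    · intro t ht
      rw [interior_Iic] at ht
      have ht0 : t < 0 := ht.trans (by linarith)
      rw [(hHderiv t ht0.ne).deriv]
      apply div_nonneg _ (sq_nonneg t)
      have h1 := hAR t (by rw [abs_of_neg ht0]; linarith [mem_Iio.mp ht])
      have h2 := (hFpos t ht0.ne).le
      nlinarith
  have hFT : 0 < F T := hFpos T hT.ne'
  have hFT' : 0 < F (-T) := hFpos (-T) (by linarith)
  constructor
  · -- atTop
    have hbound : ∀ t, T ≤ t → F T / T * t ≤ F t := by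
      intro t ht
      have ht0 : 0 < t := hT.trans_le ht
      have h := hmono self_mem_Ici ht ht
      simp only [hHdef] at h
      exact (le_div_iff₀ ht0).mp h
    refine tendsto_atTop_mono' _ (eventually_atTop.2 ⟨T, hbound⟩) ?_
    exact (tendsto_id.const_mul_atTop (div_pos hFT hT))
  · -- atBot
    have hbound : ∀ t, t ≤ -T → F (-T) / T * (-t) ≤ F t := by
      intro t ht
      have ht0 : t < 0 := ht.trans_lt (by linarith)
      have h := hmono2 ht self_mem_Iic ht
      simp only [hHdef] at h
      have h2 := (div_le_iff_of_neg ht0).mp h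
      have heq : F (-T) / (-T) * t = F (-T) / T * (-t) := by
        rw [div_neg]; ring
      linarith [heq ▸ h2]
    refine tendsto_atTop_mono' _ (eventually_atBot.2 ⟨-T, hbound⟩) ?_
    exact tendsto_neg_atBot_atTop.const_mul_atTop (div_pos hFT' hT)
end

section
/- Let N ≥ 2, ε > 0, f : ℝ → ℝ continuous strictly increasing with f(0) = 0, λ ≥ 0, and let U ∈ C²([0,1]) satisfy −ε²(U'' + (N−1)/x · U') + f(U) = 0 on (0,1), U'(0) = 0, U(1) = λ. Then 0 ≤ U(x) ≤ λ for all x ∈ [0,1] and U'(x) ≥ 0 for all x ∈ [0,1]. -/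
open Set Filter

theorem stmt5 (N : ℕ) (hN : 2 ≤ N) (ε : ℝ) (hε : 0 < ε)
    (f : ℝ → ℝ) (hf : Continuous f) (hmono : StrictMono f) (hf0 : f 0 = 0)
    (lam : ℝ) (hlam : 0 ≤ lam)
    (U : ℝ → ℝ) (hU : ContDiffOn ℝ 2 U (Set.Icc 0 1))
    (hode : ∀ x ∈ Set.Ioo (0:ℝ) 1,
      -ε ^ 2 * (deriv (deriv U) x + ((N:ℝ) - 1) / x * deriv U x) + f (U x) = 0)
    (hU'0 : deriv U 0 = 0) (hU1 : U 1 = lam) :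
    ∀ x ∈ Set.Icc (0:ℝ) 1, 0 ≤ U x ∧ U x ≤ lam ∧ 0 ≤ deriv U x := by
  have hUc : ContinuousOn U (Icc 0 1) := hU.continuousOn
  set W : ℝ → ℝ := derivWithin U (Icc 0 1) with hW
  have hWc : ContinuousOn W (Icc 0 1) :=
    hU.continuousOn_derivWithin (uniqueDiffOn_Icc one_pos) (by norm_num)
  have hWeq : ∀ x ∈ Ioo (0:ℝ) 1, W x = deriv U x := fun x hx =>
    derivWithin_of_mem_nhds (Icc_mem_nhds hx.1 hx.2)
  set V : ℝ → ℝ := fun x => x ^ (N - 1) * W x with hVdef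
  have hVc : ContinuousOn V (Icc 0 1) := (continuous_pow _).continuousOn.mul hWc
  have hV0 : V 0 = 0 := by
    simp [hVdef, zero_pow (show N - 1 ≠ 0 by omega)]
  have hU2 : ContDiffOn ℝ 2 U (Ioo 0 1) := hU.mono Ioo_subset_Icc_self
  have hdU : ContDiffOn ℝ 1 (deriv U) (Ioo 0 1) :=
    hU2.deriv_of_isOpen isOpen_Ioo (by norm_num)
  have hdiff1 : ∀ x ∈ Ioo (0:ℝ) 1, DifferentiableAt ℝ U x := fun x hx =>
    ((hU2.differentiableOn (by norm_num)) x hx).differentiableAt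
      (isOpen_Ioo.mem_nhds hx)
  have hdiff2 : ∀ x ∈ Ioo (0:ℝ) 1, HasDerivAt (deriv U) (deriv (deriv U) x) x := fun x hx =>
    (((hdU.differentiableOn (by norm_num)) x hx).differentiableAt
      (isOpen_Ioo.mem_nhds hx)).hasDerivAt
  have key : ∀ x ∈ Ioo (0:ℝ) 1, HasDerivAt V (x ^ (N - 1) * f (U x) / ε ^ 2) x := by
    intro x hx
    have hx0 : x ≠ 0 := ne_of_gt hx.1
    have hg : HasDerivAt (fun y => y ^ (N - 1) * deriv U y)
        ((↑(N - 1) : ℝ) * x ^ (N - 1 - 1) * deriv U x + x ^ (N - 1) * deriv (deriv U) x) x :=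
      (hasDerivAt_pow (N - 1) x).mul (hdiff2 x hx)
    have heq : V =ᶠ[nhds x] fun y => y ^ (N - 1) * deriv U y := by
      filter_upwards [isOpen_Ioo.mem_nhds hx] with y hy
      simp [hVdef, hWeq y hy]
    have hval : (↑(N - 1) : ℝ) * x ^ (N - 1 - 1) * deriv U x + x ^ (N - 1) * deriv (deriv U) x
        = x ^ (N - 1) * f (U x) / ε ^ 2 := by
      have hcast : (↑(N - 1) : ℝ) = (N : ℝ) - 1 := by
        push_cast [Nat.cast_sub (by omega : 1 ≤ N)]; ring
      have hidx : N - 1 - 1 = N - 2 := by omega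
      have hpow : x ^ (N - 1) = x ^ (N - 2) * x := by
        rw [← pow_succ]; congr 1; omega
      have h := hode x hx
      have hfe : f (U x) = ε ^ 2 * (deriv (deriv U) x + ((N:ℝ) - 1) / x * deriv U x) := by
        linarith
      rw [hcast, hidx, hfe, hpow]
      field_simp
      ring
    exact (hval ▸ hg).congr_of_eventuallyEq heq
  -- Step 1 : U ≥ 0 on [0,1]
  have hpos : ∀ x ∈ Icc (0:ℝ) 1, 0 ≤ U x := by
    by_contra hcon
    push_neg at hcon
    obtain ⟨y, hy, hyneg⟩ := hcon
    obtain ⟨x₀, hx₀mem, hx₀min⟩ :=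
      isCompact_Icc.exists_isMinOn (⟨0, by norm_num⟩ : (Icc (0:ℝ) 1).Nonempty) hUc
    have hneg : U x₀ < 0 := lt_of_le_of_lt (hx₀min hy) hyneg
    have hx₀1 : x₀ < 1 := by
      rcases lt_or_eq_of_le hx₀mem.2 with h | h
      · exact h
      · rw [h] at hneg; rw [hU1] at hneg; linarith
    set S : Set ℝ := Icc x₀ 1 ∩ U ⁻¹' Ici 0 with hSdef
    have hSclosed : IsClosed S :=
      (hUc.mono (Icc_subset_Icc hx₀mem.1 le_rfl)).preimage_isClosed_of_isClosed
        isClosed_Icc isClosed_Ici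
    have hS1 : (1:ℝ) ∈ S := ⟨⟨hx₀mem.2, le_rfl⟩, by simp [hU1, hlam]⟩
    have hSbdd : BddBelow S := ⟨x₀, fun z hz => hz.1.1⟩
    set b : ℝ := sInf S with hbdef
    have hbS : b ∈ S := hSclosed.csInf_mem ⟨1, hS1⟩ hSbdd
    have hUb : 0 ≤ U b := hbS.2
    have hx₀b : x₀ < b := by
      rcases lt_or_eq_of_le hbS.1.1 with h | h
      · exact h
      · rw [← h] at hUb; linarith
    have hb1 : b ≤ 1 := hbS.1.2
    have hUneg : ∀ z, x₀ ≤ z → z < b → U z < 0 := by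
      intro z h1 h2
      by_contra h
      push_neg at h
      exact absurd (csInf_le hSbdd ⟨⟨h1, le_trans h2.le hb1⟩, h⟩) (not_le.2 h2)
    have hVx₀ : V x₀ = 0 := by
      rcases eq_or_lt_of_le hx₀mem.1 with h | h
      · rw [← h]; exact hV0
      · have hloc : deriv U x₀ = 0 :=
          (hx₀min.isLocalMin (Icc_mem_nhds h hx₀1)).deriv_eq_zero
        simp [hVdef, hWeq x₀ ⟨h, hx₀1⟩, hloc]
    have hsub : Icc x₀ b ⊆ Icc (0:ℝ) 1 := Icc_subset_Icc hx₀mem.1 hb1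
    have hsubI : Ioo x₀ b ⊆ Ioo (0:ℝ) 1 := fun z hz =>
      ⟨lt_of_le_of_lt hx₀mem.1 hz.1, lt_of_lt_of_le hz.2 hb1⟩
    have hVanti : StrictAntiOn V (Icc x₀ b) := by
      apply strictAntiOn_of_deriv_neg (convex_Icc _ _) (hVc.mono hsub)
      intro z hz
      rw [interior_Icc] at hz
      have hz' := hsubI hz
      rw [(key z hz').deriv]
      have hfz : f (U z) < 0 := by
        have := hmono (hUneg z hz.1.le hz.2)
        rwa [hf0] at this
      exact div_neg_of_neg_of_pos (mul_neg_of_pos_of_neg (pow_pos hz'.1 _) hfz)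
        (pow_pos hε 2)
    have hdUneg : ∀ z ∈ Ioo x₀ b, deriv U z < 0 := by
      intro z hz
      have hVz : V z < 0 := by
        have := hVanti (left_mem_Icc.2 (le_of_lt hx₀b)) ⟨hz.1.le, hz.2.le⟩ hz.1
        rwa [hVx₀] at this
      have hz' := hsubI hz
      have hzpow : (0:ℝ) < z ^ (N - 1) := pow_pos hz'.1 _
      have : z ^ (N - 1) * deriv U z < 0 := by
        simpa only [hVdef, hWeq z hz'] using hVz
      nlinarith
    have hUanti : StrictAntiOn U (Icc x₀ b) := by
      apply strictAntiOn_of_deriv_neg (convex_Icc _ _) (hUc.mono hsub)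
      intro z hz
      rw [interior_Icc] at hz
      exact hdUneg z hz
    have : U b < U x₀ :=
      hUanti (left_mem_Icc.2 hx₀b.le) (right_mem_Icc.2 hx₀b.le) hx₀b
    exact absurd (hx₀min (hsub (right_mem_Icc.2 hx₀b.le))) (not_le.2 this)
  -- Step 2 : V ≥ 0, hence U' ≥ 0 on (0,1), hence U monotone
  have hfU : ∀ x ∈ Icc (0:ℝ) 1, 0 ≤ f (U x) := by
    intro x hx
    have := hmono.monotone (hpos x hx)
    rwa [hf0] at this
  have hVmono : MonotoneOn V (Icc 0 1) := by
    apply monotoneOn_of_deriv_nonneg (convex_Icc _ _) hVc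
    · intro z hz
      rw [interior_Icc] at hz
      exact (key z hz).differentiableAt.differentiableWithinAt
    · intro z hz
      rw [interior_Icc] at hz
      rw [(key z hz).deriv]
      exact div_nonneg (mul_nonneg (pow_nonneg hz.1.le _)
        (hfU z ⟨hz.1.le, hz.2.le⟩)) (pow_nonneg hε.le 2)
  have hdUnn : ∀ x ∈ Ioo (0:ℝ) 1, 0 ≤ deriv U x := by
    intro x hx
    have hVx : 0 ≤ V x := by
      have := hVmono (left_mem_Icc.2 zero_le_one) ⟨hx.1.le, hx.2.le⟩ hx.1.le
      rwa [hV0] at this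
    have hxpow : (0:ℝ) < x ^ (N - 1) := pow_pos hx.1 _
    have : 0 ≤ x ^ (N - 1) * deriv U x := by
      simpa only [hVdef, hWeq x hx] using hVx
    nlinarith
  have hUmono : MonotoneOn U (Icc 0 1) := by
    apply monotoneOn_of_deriv_nonneg (convex_Icc _ _) hUc
    · intro z hz
      rw [interior_Icc] at hz
      exact (hdiff1 z hz).differentiableWithinAt
    · intro z hz
      rw [interior_Icc] at hz
      exact hdUnn z hz
  intro x hx
  refine ⟨hpos x hx, ?_, ?_⟩
  · have := hUmono hx (right_mem_Icc.2 zero_le_one) hx.2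
    rwa [hU1] at this
  · rcases eq_or_lt_of_le hx.1 with h0 | h0
    · rw [← h0]; exact le_of_eq hU'0.symm
    rcases eq_or_lt_of_le hx.2 with h1 | h1
    swap
    · exact hdUnn x ⟨h0, h1⟩
    subst h1
    by_cases hdiff : DifferentiableAt ℝ U 1
    · have htend := hasDerivAt_iff_tendsto_slope.1 hdiff.hasDerivAt
      have hle : nhdsWithin (1:ℝ) (Ioo 0 1) ≤ nhdsWithin 1 {(1:ℝ)}ᶜ :=
        nhdsWithin_mono _ (fun y hy => ne_of_lt hy.2)
      have hne : (nhdsWithin (1:ℝ) (Ioo 0 1)).NeBot := by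
        rw [← mem_closure_iff_nhdsWithin_neBot, closure_Ioo (by norm_num : (0:ℝ) ≠ 1)]
        exact ⟨zero_le_one, le_rfl⟩
      refine ge_of_tendsto (htend.mono_left hle) ?_
      filter_upwards [self_mem_nhdsWithin] with y hy
      rw [slope_def_field]
      have hUy : U y ≤ U 1 := hUmono ⟨hy.1.le, hy.2.le⟩ (right_mem_Icc.2 zero_le_one) hy.2.le
      exact div_nonneg_iff.2 (Or.inr ⟨by linarith, by linarith [hy.2]⟩)
    · rw [deriv_zero_of_not_differentiableAt hdiff]
end

section
/- Let N ≥ 2, ε > 0, f : ℝ → ℝ continuous strictly increasing with f(0) = 0, λ < 0, and let U ∈ C²([0,1]) satisfy −ε²(U'' + (N−1)/x · U') + f(U) = 0 on (0,1), U'(0) = 0, U(1) = λ. Then λ ≤ U(x) ≤ 0 and U'(x) ≤ 0 for all x ∈ [0,1]. -/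
/-!
With `m = N - 1` the equation reads `Δ_m U = f(U)/ε²` for `Δ_m U = U'' + (m/x) U'`, and
`(x^m U')' = x^m Δ_m U`. At a positive maximum `x₀ < 1` of `U` the flux `x^m U'` vanishes
(at `x₀ = 0` because `m ≥ 1`). Up to the first point `c ≥ x₀` where `U ≤ 0` we have
`f(U) > 0`, so the flux stays nonnegative and `U` is nondecreasing on `[x₀, c]`, contradicting
`U(c) ≤ 0 < U(x₀)`. Hence `U ≤ 0`, so `f(U) ≤ 0`, the flux decreases from `0`, `U' ≤ 0`,
and `U ≥ U(1) = λ`.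
-/

open Set

lemma exists_nonpos_and_pos_on_Ico {g : ℝ → ℝ} {a b : ℝ} (hab : a ≤ b)
    (hg : ContinuousOn g (Icc a b)) (hb : g b ≤ 0) :
    ∃ c ∈ Icc a b, g c ≤ 0 ∧ ∀ y ∈ Ico a c, 0 < g y := by
  have hclosed : IsClosed (Icc a b ∩ g ⁻¹' Iic 0) :=
    hg.preimage_isClosed_of_isClosed isClosed_Icc isClosed_Iic
  obtain ⟨c, ⟨hc, hgc⟩, hleast⟩ :=
    (isCompact_Icc.of_isClosed_subset hclosed inter_subset_left).exists_isLeast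
      ⟨b, right_mem_Icc.2 hab, hb⟩
  refine ⟨c, hc, hgc, fun y hy => ?_⟩
  by_contra! hgy
  exact (hleast ⟨⟨hy.1, hy.2.le.trans hc.2⟩, hgy⟩).not_gt hy.2

/-- The radial Laplacian in dimension `m + 1`. -/
noncomputable def radialLaplacian (m : ℕ) (U : ℝ → ℝ) (x : ℝ) : ℝ :=
  deriv (deriv U) x + m / x * deriv U x

noncomputable def radialFlux (m : ℕ) (U : ℝ → ℝ) (x : ℝ) : ℝ :=
  x ^ m * derivWithin U (Icc 0 1) x

section Radial

variable {m : ℕ} {U : ℝ → ℝ} {x a b : ℝ}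

lemma radialFlux_zero (hm : m ≠ 0) : radialFlux m U 0 = 0 := by
  simp [radialFlux, hm]

lemma radialFlux_eq_of_mem_Ioo (hx : x ∈ Ioo 0 1) : radialFlux m U x = x ^ m * deriv U x := by
  rw [radialFlux, derivWithin_of_mem_nhds (Icc_mem_nhds hx.1 hx.2)]

lemma radialFlux_eq_of_differentiableAt (hx : x ∈ Icc 0 1) (hd : DifferentiableAt ℝ U x) :
    radialFlux m U x = x ^ m * deriv U x := by
  rw [radialFlux, hd.derivWithin (uniqueDiffOn_Icc zero_lt_one x hx)]

lemma continuousOn_radialFlux (hU : ContDiffOn ℝ 1 U (Icc 0 1)) :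
    ContinuousOn (radialFlux m U) (Icc 0 1) :=
  (continuous_pow m).continuousOn.mul
    (hU.continuousOn_derivWithin (uniqueDiffOn_Icc zero_lt_one) le_rfl)

lemma hasDerivAt_radialFlux (hU : ContDiffOn ℝ 2 U (Icc 0 1)) (hx : x ∈ Ioo 0 1) :
    HasDerivAt (radialFlux m U) (x ^ m * radialLaplacian m U x) x := by
  have hU' : ContDiffOn ℝ 1 (deriv U) (Ioo 0 1) :=
    (hU.mono Ioo_subset_Icc_self).deriv_of_isOpen isOpen_Ioo (by norm_num)
  have hU'' : HasDerivAt (deriv U) (deriv (deriv U) x) x :=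
    ((hU'.differentiableOn one_ne_zero x hx).differentiableAt
      (isOpen_Ioo.mem_nhds hx)).hasDerivAt
  have hflux : (fun y => y ^ m * deriv U y) =ᶠ[nhds x] radialFlux m U := by
    filter_upwards [isOpen_Ioo.mem_nhds hx] with y hy
    exact (radialFlux_eq_of_mem_Ioo hy).symm
  have hderiv : x ^ m * radialLaplacian m U x
      = m * x ^ (m - 1) * deriv U x + x ^ m * deriv (deriv U) x := by
    rcases m with _ | k
    · simp [radialLaplacian]
    · have hx0 : x ≠ 0 := hx.1.ne'
      simp only [radialLaplacian, add_tsub_cancel_right, pow_succ]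
      field_simp
      ring
  rw [hderiv]
  exact ((hasDerivAt_pow m x).mul hU'').congr_of_eventuallyEq hflux.symm

lemma radialFlux_eq_zero_of_isMaxOn (hm : m ≠ 0) (hx : x ∈ Ico 0 1)
    (hmax : IsMaxOn U (Icc 0 1) x) :
    radialFlux m U x = 0 := by
  rcases hx.1.eq_or_lt with rfl | hx0
  · exact radialFlux_zero hm
  · rw [radialFlux_eq_of_mem_Ioo ⟨hx0, hx.2⟩,
      (hmax.isLocalMax (Icc_mem_nhds hx0 hx.2)).deriv_eq_zero, mul_zero]

lemma deriv_nonneg_of_radialFlux_nonneg (hx : x ∈ Ioc 0 1) (h : 0 ≤ radialFlux m U x) :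
    0 ≤ deriv U x := by
  by_cases hd : DifferentiableAt ℝ U x
  · rw [radialFlux_eq_of_differentiableAt (Ioc_subset_Icc_self hx) hd] at h
    exact nonneg_of_mul_nonneg_right h (pow_pos hx.1 m)
  · rw [deriv_zero_of_not_differentiableAt hd]

lemma deriv_nonpos_of_radialFlux_nonpos (hx : x ∈ Ioc 0 1) (h : radialFlux m U x ≤ 0) :
    deriv U x ≤ 0 := by
  by_cases hd : DifferentiableAt ℝ U x
  · rw [radialFlux_eq_of_differentiableAt (Ioc_subset_Icc_self hx) hd] at h
    exact nonpos_of_mul_nonpos_right h (pow_pos hx.1 m)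
  · rw [deriv_zero_of_not_differentiableAt hd]

lemma monotoneOn_radialFlux (hU : ContDiffOn ℝ 2 U (Icc 0 1)) (ha : 0 ≤ a) (hb : b ≤ 1)
    (hΔ : ∀ x ∈ Ioo a b, 0 ≤ radialLaplacian m U x) :
    MonotoneOn (radialFlux m U) (Icc a b) := by
  have hIoo : ∀ x ∈ Ioo a b, x ∈ Ioo (0 : ℝ) 1 := fun x hx =>
    ⟨ha.trans_lt hx.1, hx.2.trans_le hb⟩
  refine monotoneOn_of_deriv_nonneg (convex_Icc a b)
    ((continuousOn_radialFlux (hU.of_le one_le_two)).mono (Icc_subset_Icc ha hb)) ?_ ?_ <;>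
    rw [interior_Icc] <;> intro x hx
  · exact (hasDerivAt_radialFlux hU (hIoo x hx)).differentiableAt.differentiableWithinAt
  · rw [(hasDerivAt_radialFlux hU (hIoo x hx)).deriv]
    exact mul_nonneg (pow_nonneg (hIoo x hx).1.le m) (hΔ x hx)

lemma antitoneOn_radialFlux (hU : ContDiffOn ℝ 2 U (Icc 0 1)) (ha : 0 ≤ a) (hb : b ≤ 1)
    (hΔ : ∀ x ∈ Ioo a b, radialLaplacian m U x ≤ 0) :
    AntitoneOn (radialFlux m U) (Icc a b) := by
  have hIoo : ∀ x ∈ Ioo a b, x ∈ Ioo (0 : ℝ) 1 := fun x hx =>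
    ⟨ha.trans_lt hx.1, hx.2.trans_le hb⟩
  refine antitoneOn_of_deriv_nonpos (convex_Icc a b)
    ((continuousOn_radialFlux (hU.of_le one_le_two)).mono (Icc_subset_Icc ha hb)) ?_ ?_ <;>
    rw [interior_Icc] <;> intro x hx
  · exact (hasDerivAt_radialFlux hU (hIoo x hx)).differentiableAt.differentiableWithinAt
  · rw [(hasDerivAt_radialFlux hU (hIoo x hx)).deriv]
    exact mul_nonpos_of_nonneg_of_nonpos (pow_nonneg (hIoo x hx).1.le m) (hΔ x hx)

theorem nonpos_of_radialLaplacian_nonneg_of_pos (hm : m ≠ 0)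
    (hU : ContDiffOn ℝ 2 U (Icc 0 1))
    (hΔ : ∀ x ∈ Ioo 0 1, 0 < U x → 0 ≤ radialLaplacian m U x) (h1 : U 1 ≤ 0) :
    ∀ x ∈ Icc (0 : ℝ) 1, U x ≤ 0 := by
  by_contra! ⟨z, hz, hUz⟩
  obtain ⟨x₀, hx₀, hmax⟩ :=
    isCompact_Icc.exists_isMaxOn (nonempty_Icc.2 zero_le_one) hU.continuousOn
  have hUx₀ : 0 < U x₀ := hUz.trans_le (hmax hz)
  have hx₀1 : x₀ < 1 := hx₀.2.lt_of_ne (by rintro rfl; linarith)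
  obtain ⟨c, hc, hUc, hpos⟩ := exists_nonpos_and_pos_on_Ico hx₀1.le
    (hU.continuousOn.mono (Icc_subset_Icc hx₀.1 le_rfl)) h1
  have hflux : MonotoneOn (radialFlux m U) (Icc x₀ c) :=
    monotoneOn_radialFlux hU hx₀.1 hc.2 fun x hx =>
      hΔ x ⟨hx₀.1.trans_lt hx.1, hx.2.trans_le hc.2⟩ (hpos x ⟨hx.1.le, hx.2⟩)
  have hUmono : MonotoneOn U (Icc x₀ c) := by
    refine monotoneOn_of_deriv_nonneg (convex_Icc x₀ c)
      (hU.continuousOn.mono (Icc_subset_Icc hx₀.1 hc.2))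
      ((hU.differentiableOn two_ne_zero).mono (interior_subset.trans
        (Icc_subset_Icc hx₀.1 hc.2))) ?_
    rw [interior_Icc]
    intro x hx
    refine deriv_nonneg_of_radialFlux_nonneg (m := m)
      ⟨hx₀.1.trans_lt hx.1, hx.2.le.trans hc.2⟩ ?_
    rw [← radialFlux_eq_zero_of_isMaxOn hm ⟨hx₀.1, hx₀1⟩ hmax]
    exact hflux (left_mem_Icc.2 hc.1) ⟨hx.1.le, hx.2.le⟩ hx.1.le
  linarith [hUmono (left_mem_Icc.2 hc.1) (right_mem_Icc.2 hc.1) hc.1]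

theorem radialFlux_nonpos_of_radialLaplacian_nonpos (hm : m ≠ 0)
    (hU : ContDiffOn ℝ 2 U (Icc 0 1))
    (hΔ : ∀ x ∈ Ioo 0 1, radialLaplacian m U x ≤ 0) :
    ∀ x ∈ Icc (0 : ℝ) 1, radialFlux m U x ≤ 0 := by
  intro x hx
  rw [← radialFlux_zero (U := U) hm]
  exact antitoneOn_radialFlux hU le_rfl le_rfl hΔ (left_mem_Icc.2 zero_le_one) hx hx.1

end Radial

theorem stmt6_general (N : ℕ) (hN : 2 ≤ N) (ε : ℝ) (hε : 0 < ε)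
    (f : ℝ → ℝ) (hmono : StrictMono f) (hf0 : f 0 = 0)
    (lam : ℝ) (hlam : lam < 0)
    (U : ℝ → ℝ) (hU : ContDiffOn ℝ 2 U (Set.Icc 0 1))
    (hode : ∀ x ∈ Set.Ioo (0:ℝ) 1,
      -ε ^ 2 * (deriv (deriv U) x + ((N:ℝ) - 1) / x * deriv U x) + f (U x) = 0)
    (hU'0 : deriv U 0 = 0) (hU1 : U 1 = lam) :
    ∀ x ∈ Set.Icc (0:ℝ) 1, lam ≤ U x ∧ U x ≤ 0 ∧ deriv U x ≤ 0 := by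
  have hm : N - 1 ≠ 0 := by omega
  have hΔ : ∀ x ∈ Ioo (0 : ℝ) 1, radialLaplacian (N - 1) U x = f (U x) / ε ^ 2 := by
    intro x hx
    rw [radialLaplacian, Nat.cast_pred (by omega), eq_div_iff (by positivity)]
    linarith [hode x hx]
  have hUle : ∀ x ∈ Icc (0 : ℝ) 1, U x ≤ 0 :=
    nonpos_of_radialLaplacian_nonneg_of_pos hm hU (fun x hx hUx => by
      rw [hΔ x hx]; exact div_nonneg (hf0 ▸ (hmono hUx).le) (by positivity)) (hU1 ▸ hlam.le)
  have hflux : ∀ x ∈ Icc (0 : ℝ) 1, radialFlux (N - 1) U x ≤ 0 :=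
    radialFlux_nonpos_of_radialLaplacian_nonpos hm hU fun x hx => by
      rw [hΔ x hx]
      exact div_nonpos_of_nonpos_of_nonneg
        (hf0 ▸ hmono.monotone (hUle x (Ioo_subset_Icc_self hx))) (by positivity)
  have hderiv : ∀ x ∈ Icc (0 : ℝ) 1, deriv U x ≤ 0 := by
    intro x hx
    rcases hx.1.eq_or_lt with rfl | hx0
    · exact hU'0.le
    · exact deriv_nonpos_of_radialFlux_nonpos ⟨hx0, hx.2⟩ (hflux x hx)
  have hanti : AntitoneOn U (Icc 0 1) :=
    antitoneOn_of_deriv_nonpos (convex_Icc 0 1) hU.continuousOn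
      ((hU.differentiableOn two_ne_zero).mono interior_subset)
      fun x hx => hderiv x (interior_subset hx)
  exact fun x hx =>
    ⟨hU1 ▸ hanti hx (right_mem_Icc.2 zero_le_one) hx.2, hUle x hx, hderiv x hx⟩

theorem stmt6 (N : ℕ) (hN : 2 ≤ N) (ε : ℝ) (hε : 0 < ε)
    (f : ℝ → ℝ) (hf : Continuous f) (hmono : StrictMono f) (hf0 : f 0 = 0)
    (lam : ℝ) (hlam : lam < 0)
    (U : ℝ → ℝ) (hU : ContDiffOn ℝ 2 U (Set.Icc 0 1))
    (hode : ∀ x ∈ Set.Ioo (0:ℝ) 1,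
      -ε ^ 2 * (deriv (deriv U) x + ((N:ℝ) - 1) / x * deriv U x) + f (U x) = 0)
    (hU'0 : deriv U 0 = 0) (hU1 : U 1 = lam) :
    ∀ x ∈ Set.Icc (0:ℝ) 1, lam ≤ U x ∧ U x ≤ 0 ∧ deriv U x ≤ 0 :=
  stmt6_general N hN ε hε f hmono hf0 lam hlam U hU hode hU'0 hU1
end

section
/- Let N ≥ 2, ε > 0, f continuous strictly increasing with f(0) = 0, and let U ∈ C²([0,1]) solve −ε²(U'' + (N−1)/x · U') + f(U) = 0 on (0,1) with U'(0) = 0 and U(1) = 0. Then U ≡ 0 on [0,1]. -/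
/-!
The function `w(x) = x^(N-1) U'(x)` satisfies `w' = x^(N-1) f(U) / ε²`, so `w` increases strictly
wherever `U > 0`. If `U` had a positive maximum at `x₀ < 1`, then `w(x₀) = 0` (either `x₀ = 0` or
`U'(x₀) = 0`), hence `U' > 0` just to the right of `x₀` and `U` would exceed its maximum there.
Applying this to `U` and to `-U` gives `U ≡ 0`.
-/

open Set Filter Topology

theorem hasDerivAt_pow_mul_deriv {U : ℝ → ℝ} {x : ℝ} (k : ℕ) (hx : x ≠ 0)
    (hU : DifferentiableAt ℝ (deriv U) x) :
    HasDerivAt (fun t => t ^ k * deriv U t)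
      (x ^ k * (deriv (deriv U) x + k / x * deriv U x)) x := by
  refine ((hasDerivAt_pow k x).fun_mul hU.hasDerivAt).congr_deriv ?_
  rcases k with _ | k
  · simp
  · field_simp
    push_cast
    ring

theorem strictMonoOn_of_pow_mul_deriv_pos {U V : ℝ → ℝ} {a b : ℝ} (k : ℕ) (ha : 0 ≤ a)
    (hU : ContinuousOn U (Icc a b)) (hV : ContinuousOn V (Icc a b))
    (hUV : ∀ x ∈ Ioo a b, HasDerivAt U (V x) x)
    (hw : ∀ x ∈ Ioo a b, 0 < deriv (fun t => t ^ k * V t) x) (hwa : 0 ≤ a ^ k * V a) :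
    StrictMonoOn U (Icc a b) := by
  have hw_mono : StrictMonoOn (fun t => t ^ k * V t) (Icc a b) :=
    strictMonoOn_of_deriv_pos (convex_Icc a b) ((continuousOn_pow k).mul hV)
      (by rwa [interior_Icc])
  refine strictMonoOn_of_deriv_pos (convex_Icc a b) hU fun x hx => ?_
  rw [interior_Icc] at hx
  rw [(hUV x hx).deriv]
  have hwx : 0 < x ^ k * V x :=
    hwa.trans_lt (hw_mono ⟨le_rfl, (hx.1.trans hx.2).le⟩ (Ioo_subset_Icc_self hx) hx.1)
  exact pos_of_mul_pos_right hwx (pow_nonneg (ha.trans hx.1.le) k)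

theorem ContDiffOn.differentiableAt_deriv {U : ℝ → ℝ} {s : Set ℝ} {x : ℝ}
    (hU : ContDiffOn ℝ 2 U s) (hs : s ∈ 𝓝 x) : DifferentiableAt ℝ (deriv U) x := by
  obtain ⟨t, hts, ht, hxt⟩ := mem_nhds_iff.1 hs
  have hU' : ContDiffOn ℝ 1 (deriv U) t := (hU.mono hts).deriv_of_isOpen ht (by norm_num)
  exact (hU'.differentiableOn one_ne_zero x hxt).differentiableAt (ht.mem_nhds hxt)

theorem derivWithin_eventuallyEq_deriv {U : ℝ → ℝ} {s : Set ℝ} {x : ℝ} (hs : s ∈ 𝓝 x) :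
    derivWithin U s =ᶠ[𝓝 x] deriv U := by
  filter_upwards [eventually_mem_nhds_iff.2 hs] with y hy using derivWithin_of_mem_nhds hy

theorem nonpos_of_radial_laplacian_pos {U : ℝ → ℝ} (k : ℕ) (hk : k ≠ 0)
    (hU : ContDiffOn ℝ 2 U (Icc 0 1))
    (hsub : ∀ x ∈ Ioo (0 : ℝ) 1, 0 < U x → 0 < deriv (deriv U) x + k / x * deriv U x)
    (hU1 : U 1 ≤ 0) : ∀ x ∈ Icc (0 : ℝ) 1, U x ≤ 0 := by
  by_contra! ⟨y, hy, hUy⟩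
  have hUc := hU.continuousOn
  obtain ⟨x₀, hx₀, hmax⟩ := isCompact_Icc.exists_isMaxOn ⟨y, hy⟩ hUc
  have hUx₀ : 0 < U x₀ := hUy.trans_le (hmax hy)
  have hx₀1 : x₀ < 1 := hx₀.2.lt_of_ne (by rintro rfl; linarith)
  obtain ⟨b, hx₀b, hb⟩ : ∃ b, x₀ < b ∧ Icc x₀ b ⊆ Icc x₀ 1 ∩ {x | 0 < U x} := by
    rw [← mem_nhdsGE_iff_exists_Icc_subset]
    have hcont : ContinuousWithinAt U (Icc x₀ 1) x₀ :=
      (hUc x₀ hx₀).mono (Icc_subset_Icc_left hx₀.1)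
    rw [ContinuousWithinAt, nhdsWithin_Icc_eq_nhdsGE hx₀1] at hcont
    exact inter_mem (Icc_mem_nhdsGE hx₀1) (hcont (lt_mem_nhds hUx₀))
  have hsub_Icc : Icc x₀ b ⊆ Icc 0 1 := fun x hx => Icc_subset_Icc_left hx₀.1 (hb hx).1
  have hsub_Ioo : Ioo x₀ b ⊆ Ioo 0 1 := fun x hx =>
    ⟨hx₀.1.trans_lt hx.1, hx.2.trans_le (hb ⟨hx₀b.le, le_rfl⟩).1.2⟩
  set V := derivWithin U (Icc 0 1)
  have hV : ∀ x ∈ Ioo (0 : ℝ) 1, V =ᶠ[𝓝 x] deriv U := fun x hx =>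
    derivWithin_eventuallyEq_deriv (Icc_mem_nhds hx.1 hx.2)
  have hUV : ∀ x ∈ Ioo x₀ b, HasDerivAt U (V x) x := fun x hx => by
    have hx' := hsub_Ioo hx
    rw [(hV x hx').eq_of_nhds]
    exact ((hU.differentiableOn two_ne_zero x (Ioo_subset_Icc_self hx')).differentiableAt
      (Icc_mem_nhds hx'.1 hx'.2)).hasDerivAt
  have hw : ∀ x ∈ Ioo x₀ b, 0 < deriv (fun t => t ^ k * V t) x := fun x hx => by
    have hx' := hsub_Ioo hx
    have hderiv := hasDerivAt_pow_mul_deriv k hx'.1.ne'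
      (hU.differentiableAt_deriv (Icc_mem_nhds hx'.1 hx'.2))
    have hweq : (fun t => t ^ k * V t) =ᶠ[𝓝 x] fun t => t ^ k * deriv U t := by
      filter_upwards [hV x hx'] with t ht
      rw [ht]
    rw [(hderiv.congr_of_eventuallyEq hweq).deriv]
    exact mul_pos (pow_pos hx'.1 k) (hsub x hx' (hb (Ioo_subset_Icc_self hx)).2)
  have hwx₀ : x₀ ^ k * V x₀ = 0 := by
    rcases hx₀.1.eq_or_lt with rfl | hx₀0
    · simp [zero_pow hk]
    · have hloc : IsLocalMax U x₀ := hmax.isLocalMax (Icc_mem_nhds hx₀0 hx₀1)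
      rw [(hV x₀ ⟨hx₀0, hx₀1⟩).eq_of_nhds, hloc.deriv_eq_zero, mul_zero]
  have hmono : StrictMonoOn U (Icc x₀ b) :=
    strictMonoOn_of_pow_mul_deriv_pos k hx₀.1 (hUc.mono hsub_Icc)
      ((hU.derivWithin (m := 1) (uniqueDiffOn_Icc zero_lt_one) (by norm_num)).continuousOn.mono hsub_Icc)
      hUV hw hwx₀.ge
  exact (hmono ⟨le_rfl, hx₀b.le⟩ ⟨hx₀b.le, le_rfl⟩ hx₀b).not_ge
    (hmax (hsub_Icc ⟨hx₀b.le, le_rfl⟩))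

theorem stmt7_general (N : ℕ) (hN : 2 ≤ N) (ε : ℝ) (hε : 0 < ε)
    (f : ℝ → ℝ) (hmono : StrictMono f) (hf0 : f 0 = 0)
    (U : ℝ → ℝ) (hU : ContDiffOn ℝ 2 U (Set.Icc 0 1))
    (hode : ∀ x ∈ Set.Ioo (0:ℝ) 1,
      -ε ^ 2 * (deriv (deriv U) x + ((N:ℝ) - 1) / x * deriv U x) + f (U x) = 0)
    (hU1 : U 1 = 0) :
    ∀ x ∈ Set.Icc (0:ℝ) 1, U x = 0 := by
  obtain ⟨k, rfl⟩ : ∃ k, N = k + 1 := ⟨N - 1, by omega⟩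
  have hlap : ∀ x ∈ Ioo (0 : ℝ) 1,
      deriv (deriv U) x + k / x * deriv U x = f (U x) / ε ^ 2 := fun x hx => by
    have hx_ode := hode x hx
    rw [Nat.cast_succ, add_sub_cancel_right] at hx_ode
    rw [eq_div_iff (by positivity)]
    linarith
  have hle := nonpos_of_radial_laplacian_pos k (by omega) hU
    (fun x hx hUx => by
      rw [hlap x hx]
      exact div_pos (hf0 ▸ hmono hUx) (by positivity)) hU1.le
  have hge := nonpos_of_radial_laplacian_pos k (by omega) hU.neg
    (fun x hx hUx => by
      simp only [deriv.fun_neg', deriv.fun_neg]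
      rw [mul_neg, ← neg_add, hlap x hx, neg_pos]
      exact div_neg_of_neg_of_pos (hf0 ▸ hmono (neg_pos.1 hUx)) (by positivity)) (by simp [hU1])
  intro x hx
  linarith [hle x hx, hge x hx]

theorem stmt7 (N : ℕ) (hN : 2 ≤ N) (ε : ℝ) (hε : 0 < ε)
    (f : ℝ → ℝ) (hf : Continuous f) (hmono : StrictMono f) (hf0 : f 0 = 0)
    (U : ℝ → ℝ) (hU : ContDiffOn ℝ 2 U (Set.Icc 0 1))
    (hode : ∀ x ∈ Set.Ioo (0:ℝ) 1,
      -ε ^ 2 * (deriv (deriv U) x + ((N:ℝ) - 1) / x * deriv U x) + f (U x) = 0)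
    (hU'0 : deriv U 0 = 0) (hU1 : U 1 = 0) :
    ∀ x ∈ Set.Icc (0:ℝ) 1, U x = 0 :=
  stmt7_general N hN ε hε f hmono hf0 U hU hode hU1
end

section
/- Let ε > 0, M > 0, a ∈ (0,1), and let V ∈ C²([a,1]) satisfy ε² V''(x) ≥ M² V(x) on (a,1), V ≥ 0 on [a,1], V(a) ≤ Λ and V(1) ≤ Λ for some Λ ≥ 0. Then V(x) ≤ Λ(exp(−M(x−a)/ε) + exp(−M(1−x)/ε)) for all x ∈ [a,1]. -/
/-!
With `c = M / ε`, the barrier `W x = Λ (exp (-c (x - a)) + exp (c (x - 1)))` solves `W'' = c² W`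
and dominates `Λ` at both endpoints, so `U = V - W` satisfies `U'' ≥ c² U` and `U ≤ 0` at the
endpoints. At an interior positive maximum of `U` we would get `U'' ≥ c² U > 0`; but `U'' ≤ 0` at
any local maximum, since otherwise the second-derivative test makes it a local minimum as well, so
`U` is locally constant there.
-/

open Real Set Filter Topology

theorem deriv_deriv_eq_iteratedDeriv_two (f : ℝ → ℝ) : deriv (deriv f) = iteratedDeriv 2 f := by
  rw [iteratedDeriv_succ, iteratedDeriv_one]

theorem IsLocalMax.deriv_deriv_nonpos {f : ℝ → ℝ} {x : ℝ} (h : IsLocalMax f x)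
    (hc : ContinuousAt f x) : deriv (deriv f) x ≤ 0 := by
  by_contra! hpos
  have hconst : f =ᶠ[𝓝 x] fun _ => f x := by
    filter_upwards [h, isLocalMin_of_deriv_deriv_pos hpos h.deriv_eq_zero hc] with y hmax hmin
    exact le_antisymm hmax hmin
  rw [hconst.deriv.deriv_eq] at hpos
  simp at hpos

theorem nonpos_of_mul_le_deriv_deriv {U : ℝ → ℝ} {a b k : ℝ} (hk : 0 < k)
    (hU : ContinuousOn U (Icc a b)) (hUdd : ∀ x ∈ Ioo a b, k * U x ≤ deriv (deriv U) x)
    (ha : U a ≤ 0) (hb : U b ≤ 0) : ∀ x ∈ Icc a b, U x ≤ 0 := by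
  intro x hx
  obtain ⟨x₀, hx₀, hmax⟩ := isCompact_Icc.exists_isMaxOn ⟨x, hx⟩ hU
  refine (hmax hx).trans (not_lt.1 fun hpos => ?_)
  have hx₀' : x₀ ∈ Ioo a b :=
    ⟨hx₀.1.lt_of_ne (by rintro rfl; linarith), hx₀.2.lt_of_ne (by rintro rfl; linarith)⟩
  have hnhds : Icc a b ∈ 𝓝 x₀ := Icc_mem_nhds hx₀'.1 hx₀'.2
  have hdd_nonpos := (hmax.isLocalMax hnhds).deriv_deriv_nonpos (hU.continuousAt hnhds)
  nlinarith [hUdd x₀ hx₀']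

theorem le_of_mul_sub_le_deriv_deriv_sub {V W : ℝ → ℝ} {a b k : ℝ} (hk : 0 < k)
    (hV : ContDiffOn ℝ 2 V (Icc a b)) (hW : ContDiff ℝ 2 W)
    (hdd : ∀ x ∈ Ioo a b, k * (V x - W x) ≤ deriv (deriv V) x - deriv (deriv W) x)
    (ha : V a ≤ W a) (hb : V b ≤ W b) : ∀ x ∈ Icc a b, V x ≤ W x := by
  intro x hx
  refine sub_nonpos.1 <| nonpos_of_mul_le_deriv_deriv hk (U := V - W)
    (hV.continuousOn.sub hW.continuous.continuousOn) (fun y hy => ?_) (sub_nonpos.2 ha)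
    (sub_nonpos.2 hb) x hx
  rw [deriv_deriv_eq_iteratedDeriv_two, iteratedDeriv_sub
    (hV.contDiffAt (Icc_mem_nhds hy.1 hy.2)) hW.contDiffAt,
    ← deriv_deriv_eq_iteratedDeriv_two, ← deriv_deriv_eq_iteratedDeriv_two]
  exact hdd y hy

theorem deriv_deriv_const_mul_exp_add_exp (Λ c a b : ℝ) :
    deriv (deriv fun x => Λ * (exp (-c * (x - a)) + exp (c * (x - b)))) =
      fun x => c ^ 2 * (Λ * (exp (-c * (x - a)) + exp (c * (x - b)))) := by
  funext x
  rw [deriv_deriv_eq_iteratedDeriv_two, iteratedDeriv_const_mul_field,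
    iteratedDeriv_fun_add (by fun_prop) (by fun_prop),
    iteratedDeriv_comp_sub_const 2 (fun s => exp (-c * s)),
    iteratedDeriv_comp_sub_const 2 (fun s => exp (c * s))]
  simp only [iteratedDeriv_exp_const_mul]
  ring

theorem stmt10_general (ε M a Λ : ℝ) (hε : 0 < ε) (hM : 0 < M)
    (hΛ : 0 ≤ Λ)
    (V : ℝ → ℝ) (hV : ContDiffOn ℝ 2 V (Set.Icc a 1))
    (hineq : ∀ x ∈ Set.Ioo a 1, M ^ 2 * V x ≤ ε ^ 2 * deriv (deriv V) x)
    (hVa : V a ≤ Λ) (hV1 : V 1 ≤ Λ) :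
    ∀ x ∈ Set.Icc a 1,
      V x ≤ Λ * (Real.exp (-(M * (x - a)) / ε) + Real.exp (-(M * (1 - x)) / ε)) := by
  set c := M / ε
  have hexp : ∀ x, -(M * (x - a)) / ε = -c * (x - a) ∧ -(M * (1 - x)) / ε = c * (x - 1) :=
    fun x => ⟨by ring, by ring⟩
  simp only [hexp]
  refine le_of_mul_sub_le_deriv_deriv_sub (k := c ^ 2) (by positivity) hV (by fun_prop)
    (fun x hx => ?_) ?_ ?_
  · have hVdd : c ^ 2 * V x ≤ deriv (deriv V) x := by
      rw [div_pow, div_mul_eq_mul_div, div_le_iff₀ (by positivity), mul_comm _ (ε ^ 2)]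
      exact hineq x hx
    rw [deriv_deriv_const_mul_exp_add_exp]
    linarith
  · simp only [sub_self, mul_zero, exp_zero]
    nlinarith [exp_pos (c * (a - 1))]
  · simp only [sub_self, mul_zero, exp_zero]
    nlinarith [exp_pos (-c * (1 - a))]

theorem stmt10 (ε M a Λ : ℝ) (hε : 0 < ε) (hM : 0 < M) (ha : 0 < a) (ha1 : a < 1)
    (hΛ : 0 ≤ Λ)
    (V : ℝ → ℝ) (hV : ContDiffOn ℝ 2 V (Set.Icc a 1))
    (hineq : ∀ x ∈ Set.Ioo a 1, M ^ 2 * V x ≤ ε ^ 2 * deriv (deriv V) x)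
    (hVpos : ∀ x ∈ Set.Icc a 1, 0 ≤ V x)
    (hVa : V a ≤ Λ) (hV1 : V 1 ≤ Λ) :
    ∀ x ∈ Set.Icc a 1,
      V x ≤ Λ * (Real.exp (-(M * (x - a)) / ε) + Real.exp (-(M * (1 - x)) / ε)) :=
  stmt10_general ε M a Λ hε hM hΛ V hV hineq hVa hV1
end

section
/- (Main theorem, radial non-existence.) Let N ≥ 2 and f : ℝ → ℝ be continuous, strictly increasing, f(0)=0, with liminf_{t→0} f(t)/t > 0, and suppose F(t)=∫₀ᵗ f(s)ds satisfies t f(t) ≥ θ₀ F(t) for some θ₀ > 1 and all |t| large. Let g : ℝ → ℝ be continuous with g²(t) ≠ 2F(t) for all t and lim_{|t|→∞} g²(t)/(2F(t)) ≠ 1. Then there exists R* > 0 (depending on f and g) such that for every R > R*, there is no U ∈ C²([0,R]) solving −u'' − (N−1)u'/r + f(u) = 0 on (0,R) with u'(0) = 0 and u'(R) = g(u(R)). -/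
/-!
Along a radial solution the energy `E(r) = u'(r)^2 / 2 - F(u(r))` is nonincreasing, since
`E' = -(N - 1) u'^2 / r ≤ 0`. Regularity at the origin forces `u'(0) = 0`, so `E(0) = -F(u(0)) ≤ 0`
because `F ≥ 0`. On the other hand `g^2 - 2F` is continuous, never zero and positive at `0`
(where `F = 0`), hence positive everywhere, so the boundary condition gives `E(R) > 0`.
-/

open Filter Set Topology

theorem Monotone.intervalIntegral_zero_nonneg {f : ℝ → ℝ} (hf : Monotone f) (hf0 : f 0 = 0)
    (t : ℝ) : 0 ≤ ∫ s in (0:ℝ)..t, f s := by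
  rcases le_total 0 t with ht | ht
  · exact intervalIntegral.integral_nonneg ht fun s hs => hf0 ▸ hf hs.1
  · rw [intervalIntegral.integral_symm, ← intervalIntegral.integral_neg]
    exact intervalIntegral.integral_nonneg ht fun s hs => neg_nonneg.2 (hf0 ▸ hf hs.2)

theorem Continuous.pos_of_forall_ne_zero {X : Type*} [TopologicalSpace X] [PreconnectedSpace X]
    {h : X → ℝ} (hh : Continuous h) (hne : ∀ t, h t ≠ 0) {a : X} (ha : 0 < h a) (t : X) :
    0 < h t := by
  by_contra! ht
  obtain ⟨s, hs⟩ := intermediate_value_univ t a hh ⟨ht, ha.le⟩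
  exact hne s hs

section Icc

variable {v : ℝ → ℝ} {a b r : ℝ}

theorem derivWithin_Icc_of_mem_Ioo (hr : r ∈ Ioo a b) : derivWithin v (Icc a b) r = deriv v r :=
  derivWithin_of_mem_nhds (Icc_mem_nhds hr.1 hr.2)

theorem derivWithin_derivWithin_Icc_of_mem_Ioo (hr : r ∈ Ioo a b) :
    derivWithin (derivWithin v (Icc a b)) (Icc a b) r = deriv (deriv v) r := by
  rw [derivWithin_Icc_of_mem_Ioo hr]
  refine EventuallyEq.deriv_eq ?_
  filter_upwards [isOpen_Ioo.mem_nhds hr] with x hx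
  exact derivWithin_Icc_of_mem_Ioo hx

end Icc

section RadialEquation

variable {u f F : ℝ → ℝ} {c R : ℝ}

theorem antitoneOn_radial_energy (hR : 0 < R) (hu : ContDiffOn ℝ 2 u (Icc 0 R))
    (hF : ∀ t, HasDerivAt F (f t) t) (hc : 0 ≤ c)
    (hode : ∀ r ∈ Ioo 0 R, -deriv (deriv u) r - c / r * deriv u r + f (u r) = 0) :
    AntitoneOn (fun r => derivWithin u (Icc 0 R) r ^ 2 / 2 - F (u r)) (Icc 0 R) := by
  set φ := derivWithin u (Icc 0 R)
  have hφ : ContDiffOn ℝ 1 φ (Icc 0 R) := hu.derivWithin (uniqueDiffOn_Icc hR) (by norm_num)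
  have hFc : Continuous F := continuous_iff_continuousAt.2 fun t => (hF t).continuousAt
  have hE : ∀ r ∈ Ioo 0 R,
      HasDerivAt (fun r => φ r ^ 2 / 2 - F (u r)) (-(c / r * φ r ^ 2)) r := by
    intro r hr
    have hnhds : Icc 0 R ∈ 𝓝 r := Icc_mem_nhds hr.1 hr.2
    have hφr : HasDerivAt φ (deriv (deriv u) r) r := by
      rw [← derivWithin_derivWithin_Icc_of_mem_Ioo hr, derivWithin_of_mem_nhds hnhds]
      exact ((hφ.differentiableOn one_ne_zero) r (Ioo_subset_Icc_self hr)).differentiableAt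
        hnhds |>.hasDerivAt
    have hur : HasDerivAt u (deriv u r) r :=
      ((hu.differentiableOn (by norm_num)) r (Ioo_subset_Icc_self hr)).differentiableAt
        hnhds |>.hasDerivAt
    refine (((hφr.pow 2).div_const 2).sub ((hF (u r)).comp r hur)).congr_deriv ?_
    rw [show φ r = deriv u r from derivWithin_Icc_of_mem_Ioo hr]
    linear_combination -deriv u r * hode r hr
  refine antitoneOn_of_deriv_nonpos (convex_Icc 0 R)
    (((hφ.continuousOn.pow 2).div_const 2).sub (hFc.comp_continuousOn hu.continuousOn))
    ?_ ?_ <;> rw [interior_Icc]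
  · exact fun r hr => (hE r hr).differentiableAt.differentiableWithinAt
  · intro r hr
    rw [(hE r hr).deriv, neg_nonpos]
    exact mul_nonneg (div_nonneg hc hr.1.le) (sq_nonneg _)

/-- The equation is singular at `r = 0`: multiplied by `r` it reads `c u' = r (f(u) - u'')`,
whose right-hand side tends to `0`. -/
theorem derivWithin_Icc_zero_eq_zero (hR : 0 < R) (hu : ContDiffOn ℝ 2 u (Icc 0 R))
    (hf : Continuous f) (hc : c ≠ 0)
    (hode : ∀ r ∈ Ioo 0 R, -deriv (deriv u) r - c / r * deriv u r + f (u r) = 0) :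
    derivWithin u (Icc 0 R) 0 = 0 := by
  set φ := derivWithin u (Icc 0 R)
  have hφ : ContDiffOn ℝ 1 φ (Icc 0 R) := hu.derivWithin (uniqueDiffOn_Icc hR) (by norm_num)
  have h0 : (0:ℝ) ∈ Icc 0 R := left_mem_Icc.2 hR.le
  have hlim : Tendsto (fun r => r * (f (u r) - derivWithin φ (Icc 0 R) r)) (𝓝[Ioo 0 R] 0)
      (𝓝 (0 * (f (u 0) - derivWithin φ (Icc 0 R) 0))) :=
    (tendsto_id.mono_left nhdsWithin_le_nhds).mul
      ((((hf.comp_continuousOn hu.continuousOn) 0 h0).sub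
        (hφ.continuousOn_derivWithin (uniqueDiffOn_Icc hR) le_rfl 0 h0)).mono
        Ioo_subset_Icc_self)
  have heq : ∀ r ∈ Ioo 0 R, r * (f (u r) - derivWithin φ (Icc 0 R) r) = c * φ r := by
    intro r hr
    rw [derivWithin_derivWithin_Icc_of_mem_Ioo hr,
      show φ r = deriv u r from derivWithin_Icc_of_mem_Ioo hr]
    calc r * (f (u r) - deriv (deriv u) r) = r * (c / r * deriv u r) := by
          linear_combination r * hode r hr
      _ = c * deriv u r := by field_simp [hr.1.ne']
  have hneBot : (𝓝[Ioo 0 R] (0:ℝ)).NeBot := by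
    rw [← mem_closure_iff_nhdsWithin_neBot, closure_Ioo hR.ne]
    exact h0
  have hcφ : c * φ 0 = 0 := by
    refine tendsto_nhds_unique ((tendsto_const_nhds.mul ((hφ.continuousOn 0 h0).mono
      Ioo_subset_Icc_self))) ?_
    simpa using hlim.congr' (eventually_nhdsWithin_of_forall heq)
  exact (mul_eq_zero.1 hcφ).resolve_left hc

end RadialEquation

theorem stmt17_general (N : ℕ) (hN : 2 ≤ N)
    (f : ℝ → ℝ) (hf : Continuous f) (hmono : StrictMono f) (hf0 : f 0 = 0)
    (F : ℝ → ℝ) (hF : ∀ t, F t = ∫ s in (0:ℝ)..t, f s)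
    (g : ℝ → ℝ) (hg : Continuous g)
    (hne : ∀ t : ℝ, g t ^ 2 ≠ 2 * F t) :
    ∃ Rstar > (0:ℝ), ∀ R > Rstar,
      ¬ ∃ u : ℝ → ℝ, ContDiffOn ℝ 2 u (Set.Icc 0 R) ∧
        (∀ r ∈ Set.Ioo (0:ℝ) R,
          -deriv (deriv u) r - ((N:ℝ) - 1) / r * deriv u r + f (u r) = 0) ∧
        deriv u 0 = 0 ∧ deriv u R = g (u R) := by
  have hFderiv : ∀ t, HasDerivAt F (f t) t := fun t => by
    rw [funext hF]
    exact (hf.integral_hasStrictDerivAt 0 t).hasDerivAt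
  have hFnonneg : ∀ t, 0 ≤ F t := fun t =>
    hF t ▸ hmono.monotone.intervalIntegral_zero_nonneg hf0 t
  have hF0 : F 0 = 0 := by simp [hF]
  have hFc : Continuous F := continuous_iff_continuousAt.2 fun t => (hFderiv t).continuousAt
  have hgF : ∀ t, 0 < g t ^ 2 - 2 * F t :=
    ((hg.pow 2).sub (continuous_const.mul hFc)).pos_of_forall_ne_zero
      (fun t => sub_ne_zero.2 (hne t)) (a := 0) (by simpa [hF0, sq_pos_iff] using hne 0)
  have hN1 : (1:ℝ) < N := by exact_mod_cast hN
  refine ⟨1, one_pos, ?_⟩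
  rintro R hR ⟨u, hu, hode, -, huR⟩
  have hR0 : 0 < R := one_pos.trans hR
  have hE := antitoneOn_radial_energy hR0 hu hFderiv (sub_nonneg.2 hN1.le) hode
    (left_mem_Icc.2 hR0.le) (right_mem_Icc.2 hR0.le) hR0.le
  have hu0 := derivWithin_Icc_zero_eq_zero hR0 hu hf (sub_ne_zero.2 hN1.ne') hode
  have hgR : g (u R) ≠ 0 := fun h => by nlinarith [hgF (u R), hFnonneg (u R)]
  -- `deriv u R` is two-sided; being nonzero, it is not a junk value and `u` is differentiable there.
  have huR' : derivWithin u (Icc 0 R) R = g (u R) :=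
    ((differentiableAt_of_deriv_ne_zero (huR ▸ hgR)).derivWithin
      (uniqueDiffOn_Icc hR0 R (right_mem_Icc.2 hR0.le))).trans huR
  simp only [hu0, huR'] at hE
  linarith [hFnonneg (u 0), hgF (u R)]

theorem stmt17 (N : ℕ) (hN : 2 ≤ N)
    (f : ℝ → ℝ) (hf : Continuous f) (hmono : StrictMono f) (hf0 : f 0 = 0)
    (hliminf : 0 < Filter.liminf (fun t => f t / t) (nhdsWithin 0 {(0:ℝ)}ᶜ))
    (F : ℝ → ℝ) (hF : ∀ t, F t = ∫ s in (0:ℝ)..t, f s)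
    (θ₀ : ℝ) (hθ : 1 < θ₀) (T : ℝ) (hT : 0 < T)
    (hAR : ∀ t : ℝ, T ≤ |t| → θ₀ * F t ≤ t * f t)
    (g : ℝ → ℝ) (hg : Continuous g)
    (hne : ∀ t : ℝ, g t ^ 2 ≠ 2 * F t)
    (hlim : ¬ Tendsto (fun t => g t ^ 2 / (2 * F t))
      (Filter.comap (fun t : ℝ => |t|) Filter.atTop) (nhds 1)) :
    ∃ Rstar > (0:ℝ), ∀ R > Rstar,
      ¬ ∃ u : ℝ → ℝ, ContDiffOn ℝ 2 u (Set.Icc 0 R) ∧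
        (∀ r ∈ Set.Ioo (0:ℝ) R,
          -deriv (deriv u) r - ((N:ℝ) - 1) / r * deriv u r + f (u r) = 0) ∧
        deriv u 0 = 0 ∧ deriv u R = g (u R) :=
  stmt17_general N hN f hf hmono hf0 F hF g hg hne
end
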